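/- Let μ be a probability measure on [0,∞) with CDF F_μ and lower quantile function Q_μ(u) = inf{x : F_μ(x) ≥ u}. Then for every t ∈ ℝ, ∫ x·1{x ≤ t} dμ(x) = ∫_0^{F_μ(t)} Q_μ(u) du. -/

import Mathlib

open MeasureTheory Set Filter ProbabilityTheory
open scoped Topology

section HL

variable (μ : Measure ℝ) [IsProbabilityMeasure μ]

/-- The lower quantile function. -/
noncomputable def Qaux (u : ℝ) : ℝ := sInf {x : ℝ | u ≤ (μ (Set.Iic x)).toReal}

lemma Faux_eq (x : ℝ) : (μ (Set.Iic x)).toReal = cdf μ x := (cdf_eq_real μ x).symm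

variable {μ}

lemma Faux_zero (hsupp : μ (Set.Iio 0) = 0) {x : ℝ} (hx : x < 0) : cdf μ x = 0 := by
  rw [← Faux_eq]
  have : μ (Set.Iic x) = 0 :=
    measure_mono_null (fun y hy => lt_of_le_of_lt hy hx) hsupp
  simp [this]

lemma Qaux_mem (hsupp : μ (Set.Iio 0) = 0) {u : ℝ} (hu : 0 < u)
    (hne : {x : ℝ | u ≤ (μ (Set.Iic x)).toReal}.Nonempty) :
    u ≤ cdf μ (Qaux μ u) := by
  set S := {x : ℝ | u ≤ (μ (Set.Iic x)).toReal} with hS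
  have hSle : ∀ x ∈ S, u ≤ cdf μ x := fun x hx => by rw [← Faux_eq]; exact hx
  have hbdd : BddBelow S := by
    refine ⟨0, fun x hx => ?_⟩
    by_contra h
    push_neg at h
    have := hSle x hx
    rw [Faux_zero hsupp h] at this
    linarith
  set m := sInf S with hm
  have key : ∀ x, m < x → u ≤ cdf μ x := by
    intro x hx
    obtain ⟨y, hyS, hyx⟩ := exists_lt_of_csInf_lt hne hx
    exact (hSle y hyS).trans (monotone_cdf μ hyx.le)
  have htend : Tendsto (cdf μ) (𝓝[>] m) (𝓝 (cdf μ m)) :=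
    ((cdf μ).right_continuous m).tendsto.mono_left
      (nhdsWithin_mono m Ioi_subset_Ici_self)
  exact ge_of_tendsto htend (eventually_nhdsWithin_of_forall (fun x hx => key x hx))

/-- Galois connection on the relevant domain. -/
lemma Qaux_le_iff (hsupp : μ (Set.Iio 0) = 0) {u : ℝ} (hu : 0 < u)
    (hne : {x : ℝ | u ≤ (μ (Set.Iic x)).toReal}.Nonempty) (s : ℝ) :
    Qaux μ u ≤ s ↔ u ≤ cdf μ s := by
  have hbdd : BddBelow {x : ℝ | u ≤ (μ (Set.Iic x)).toReal} := by
    refine ⟨0, fun x hx => ?_⟩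
    by_contra h
    push_neg at h
    have hx' : u ≤ (μ (Set.Iic x)).toReal := hx
    rw [Faux_eq, Faux_zero hsupp h] at hx'
    linarith
  constructor
  · intro h
    exact (Qaux_mem hsupp hu hne).trans (monotone_cdf μ h)
  · intro h
    exact csInf_le hbdd (by rw [mem_setOf_eq, Faux_eq]; exact h)

lemma Qaux_nonneg (hsupp : μ (Set.Iio 0) = 0) {u : ℝ} (hu : 0 < u) :
    0 ≤ Qaux μ u := by
  rcases eq_or_ne {x : ℝ | u ≤ (μ (Set.Iic x)).toReal} ∅ with h | h
  · simp [Qaux, h, Real.sInf_empty]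
  · refine le_csInf (nonempty_iff_ne_empty.2 h) (fun x hx => ?_)
    by_contra hc
    push_neg at hc
    rw [mem_setOf_eq, Faux_eq, Faux_zero hsupp hc] at hx
    linarith

/-- Hardy–Littlewood identity: the truncated first moment equals the integral of the
lower-tail quantile function up to `F_μ(t)`. -/
theorem stmt12 (μ : Measure ℝ) [IsProbabilityMeasure μ]
    (hsupp : μ (Set.Iio 0) = 0) (hint : Integrable id μ) (t : ℝ) :
    ∫ x in Set.Iic t, x ∂μ
      = ∫ u in Set.Ioc (0 : ℝ) ((μ (Set.Iic t)).toReal),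
          sInf {x : ℝ | u ≤ (μ (Set.Iic x)).toReal} := by
  set F : ℝ → ℝ := fun x => cdf μ x with hF
  have hFt : (μ (Set.Iic t)).toReal = F t := Faux_eq μ t
  -- nonneg a.e. for LHS
  have hnnL : 0 ≤ᵐ[μ.restrict (Set.Iic t)] (fun x : ℝ => x) := by
    have : μ.restrict (Set.Iic t) (Set.Iio 0) = 0 :=
      le_antisymm (le_trans (Measure.restrict_apply_le _ _) hsupp.le) zero_le
    filter_upwards [measure_eq_zero_iff_ae_notMem.1 this] with x hx
    exact not_lt.1 (by simpa using hx)
  -- LHS via layer cake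
  have hL : ∫ x in Set.Iic t, x ∂μ
      = (∫⁻ s in Set.Ioi (0:ℝ), μ (Set.Ioc s t)).toReal := by
    rw [integral_eq_lintegral_of_nonneg_ae hnnL
      (measurable_id.aestronglyMeasurable)]
    congr 1
    rw [lintegral_eq_lintegral_meas_lt _ hnnL measurable_id.aemeasurable]
    refine setLIntegral_congr_fun_ae measurableSet_Ioi (ae_of_all _ fun s _ => ?_)
    rw [Measure.restrict_apply' measurableSet_Iic]
    congr 1
  -- key pointwise measure identity
  have hIoc : ∀ s : ℝ, 0 < s → μ (Set.Ioc s t) = ENNReal.ofReal (F t - F s) := by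
    intro s _
    rcases le_or_gt s t with h | h
    · have : μ (Set.Ioc s t) = μ (Set.Iic t) - μ (Set.Iic s) := by
        rw [← Iic_sdiff_Iic, measure_diff (Set.Iic_subset_Iic.2 h)
          measurableSet_Iic.nullMeasurableSet (measure_ne_top μ _)]
      rw [this, hF]
      rw [← ofReal_cdf μ t, ← ofReal_cdf μ s,
        ← ENNReal.ofReal_sub _ (cdf_nonneg μ s)]
    · rw [Set.Ioc_eq_empty (not_lt.2 h.le), measure_empty,
        Eq.comm, ENNReal.ofReal_eq_zero]
      have := monotone_cdf μ h.le
      simp only [hF]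
      linarith
  -- nonneg a.e. for RHS
  have hnnR : 0 ≤ᵐ[volume.restrict (Set.Ioc (0:ℝ) (F t))]
      (fun u => Qaux μ u) := by
    filter_upwards [ae_restrict_mem measurableSet_Ioc] with u hu
    exact Qaux_nonneg hsupp hu.1
  -- monotonicity for measurability
  have hmono : MonotoneOn (Qaux μ) (Set.Ioc (0:ℝ) (F t)) := by
    intro u hu v hv huv
    have hbdd : BddBelow {x : ℝ | u ≤ (μ (Set.Iic x)).toReal} := by
      refine ⟨0, fun x hx => ?_⟩
      by_contra h
      push_neg at h
      rw [mem_setOf_eq, Faux_eq, Faux_zero hsupp h] at hx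
      linarith [hu.1]
    have hnev : {x : ℝ | v ≤ (μ (Set.Iic x)).toReal}.Nonempty :=
      ⟨t, by rw [mem_setOf_eq, Faux_eq]; exact hv.2⟩
    exact csInf_le_csInf hbdd hnev (fun x hx => le_trans huv hx)
  have hmble : AEMeasurable (Qaux μ) (volume.restrict (Set.Ioc (0:ℝ) (F t))) :=
    aemeasurable_restrict_of_monotoneOn measurableSet_Ioc hmono
  -- RHS via layer cake
  have hR : ∫ u in Set.Ioc (0:ℝ) (F t), Qaux μ u
      = (∫⁻ s in Set.Ioi (0:ℝ), μ (Set.Ioc s t)).toReal := by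
    rw [integral_eq_lintegral_of_nonneg_ae hnnR hmble.aestronglyMeasurable]
    congr 1
    rw [lintegral_eq_lintegral_meas_lt _ hnnR hmble]
    refine setLIntegral_congr_fun_ae measurableSet_Ioi (ae_of_all _ fun s hs => ?_)
    rw [Measure.restrict_apply' measurableSet_Ioc]
    have hset : {u : ℝ | s < Qaux μ u} ∩ Set.Ioc (0:ℝ) (F t)
        = Set.Ioc (F s) (F t) := by
      ext u
      simp only [Set.mem_inter_iff, Set.mem_setOf_eq, Set.mem_Ioc]
      constructor
      · rintro ⟨hlt, hu0, hut⟩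
        refine ⟨?_, hut⟩
        by_contra h
        push_neg at h
        have hne : {x : ℝ | u ≤ (μ (Set.Iic x)).toReal}.Nonempty :=
          ⟨t, by rw [mem_setOf_eq, Faux_eq]; exact hut⟩
        have := (Qaux_le_iff hsupp hu0 hne s).2 h
        linarith
      · rintro ⟨hFs, hut⟩
        have hu0 : 0 < u := lt_of_le_of_lt (cdf_nonneg μ s) hFs
        have hne : {x : ℝ | u ≤ (μ (Set.Iic x)).toReal}.Nonempty :=
          ⟨t, by rw [mem_setOf_eq, Faux_eq]; exact hut⟩
        refine ⟨?_, hu0, hut⟩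
        by_contra h
        push_neg at h
        have := (Qaux_le_iff hsupp hu0 hne s).1 h
        simp only [hF] at hFs
        linarith
    rw [hset, Real.volume_Ioc, hIoc s hs]
  rw [hFt, hL]
  rw [show (fun u => sInf {x : ℝ | u ≤ (μ (Set.Iic x)).toReal}) = Qaux μ from rfl] at *
  exact hR.symm

end HL
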